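/- Let L be a co-Heyting algebra and d a natural number. Define, for a tuple a_1, …, a_{d+1} ∈ L, elements P_0, P_1, …, P_{d+1} by P_0 = ⊤ and P_{k+1} = (P_k \ a_{k+1}) ⊓ a_{k+1}. Then the following are equivalent: (i) for all a_1, …, a_{d+1} ∈ L, P_{d+1}(a_1, …, a_{d+1}) = ⊥; (ii) L has dimension ≤ d, i.e. there is no strictly increasing chain q_0 ⊊ q_1 ⊊ ⋯ ⊊ q_{d+1} of d+2 prime filters of L. -/

import Mathlib

/-- A prime filter of a bounded lattice: upward closed, closed under `⊓`,
contains `⊤`, does not contain `⊥`, and prime with respect to `⊔`. -/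
def IsPrimeFilter {L : Type*} [Lattice L] [BoundedOrder L] (p : Set L) : Prop :=
  (∀ x ∈ p, ∀ y : L, x ≤ y → y ∈ p) ∧
  (∀ x ∈ p, ∀ y ∈ p, x ⊓ y ∈ p) ∧
  (⊤ : L) ∈ p ∧ (⊥ : L) ∉ p ∧
  ∀ x y : L, x ⊔ y ∈ p → x ∈ p ∨ y ∈ p

/-- `dim a ≥ n`: there is a strictly increasing chain `p 0 ⊊ p 1 ⊊ ⋯ ⊊ p n`
of prime filters with `a ∈ p 0`. -/
def DimGE {L : Type*} [Lattice L] [BoundedOrder L] (a : L) (n : ℕ) : Prop :=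
  ∃ p : Fin (n + 1) → Set L, (∀ i, IsPrimeFilter (p i)) ∧
    (∀ i j : Fin (n + 1), i < j → p i ⊂ p j) ∧ a ∈ p 0

/-- `codim a ≥ n`: every prime filter `p` containing `a` admits a strictly
increasing chain `q n ⊊ ⋯ ⊊ q 1 ⊊ q 0 = p` of prime filters. -/
def CodimGE {L : Type*} [Lattice L] [BoundedOrder L] (a : L) (n : ℕ) : Prop :=
  ∀ p : Set L, IsPrimeFilter p → a ∈ p →
    ∃ q : Fin (n + 1) → Set L, (∀ i, IsPrimeFilter (q i)) ∧
      (∀ i j : Fin (n + 1), i < j → q j ⊂ q i) ∧ q 0 = p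

/-- The strong order: `b ≪ a` iff for every `c`, `a ≤ b ⊔ c` implies `a ≤ c`. -/
def StrongBelow {L : Type*} [Lattice L] (b a : L) : Prop :=
  ∀ c : L, a ≤ b ⊔ c → a ≤ c

/-- Hosoi's terms: `P 0 = ⊤` and `P (k+1) = (P k \ a_{k+1}) ⊓ a_{k+1}`. -/
def Pterm {L : Type*} [CoheytingAlgebra L] : (k : ℕ) → (Fin k → L) → L
  | 0, _ => ⊤
  | k + 1, a => (Pterm k (fun i => a i.castSucc) \ a (Fin.last k)) ⊓ a (Fin.last k)

/-!
If `q₀ ⊊ q₁ ⊊ ⋯ ⊊ q_{d+1}` are prime filters, pick `a_k ∈ q_k \ q_{k-1}`. Since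
`P_{k-1} ≤ a_k ⊔ (P_{k-1} \ a_k)` and `a_k ∉ q_{k-1}`, primeness gives `P_{k-1} \ a_k ∈ q_{k-1}`;
hence inductively `P_k ∈ q_k`, and `P_{d+1} ≠ ⊥`.

Conversely, a nonzero `P_{d+1}` lies in some prime filter `p`. Whenever `(b \ a) ⊓ a ∈ p`, the
principal filter of `b` is disjoint from the ideal generated by `pᶜ` and `a` (as `b ≤ j ⊔ a` forces
`b \ a ≤ j`), so the prime separation theorem yields a prime filter `q ⊊ p` containing `b`.
Following the recursion defining `P` downwards gives a chain of `d + 2` prime filters.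
-/

section Lattice
variable {L : Type*} [Lattice L] [BoundedOrder L]

namespace IsPrimeFilter
variable {p : Set L}

theorem mem_of_le (hp : IsPrimeFilter p) {x y : L} (hx : x ∈ p) (hxy : x ≤ y) : y ∈ p :=
  hp.1 x hx y hxy

theorem inf_mem (hp : IsPrimeFilter p) {x y : L} (hx : x ∈ p) (hy : y ∈ p) : x ⊓ y ∈ p :=
  hp.2.1 x hx y hy

theorem top_mem (hp : IsPrimeFilter p) : (⊤ : L) ∈ p :=
  hp.2.2.1

theorem bot_notMem (hp : IsPrimeFilter p) : (⊥ : L) ∉ p :=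
  hp.2.2.2.1

theorem mem_or_mem (hp : IsPrimeFilter p) {x y : L} (h : x ⊔ y ∈ p) : x ∈ p ∨ y ∈ p :=
  hp.2.2.2.2 x y h

def complIdeal (hp : IsPrimeFilter p) : Order.Ideal L where
  carrier := pᶜ
  lower' _ _ hyx hx hy := hx (hp.mem_of_le hy hyx)
  nonempty' := ⟨⊥, hp.bot_notMem⟩
  directed' x hx y hy :=
    ⟨x ⊔ y, fun h => (hp.mem_or_mem h).elim hx hy, le_sup_left, le_sup_right⟩

end IsPrimeFilter

theorem Order.Ideal.IsPrime.isPrimeFilter_compl {J : Order.Ideal L} (hJ : J.IsPrime) :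
    IsPrimeFilter (Jᶜ : Set L) :=
  ⟨fun _ hx _ hxy hy => hx (J.lower hxy hy),
    fun _ hx _ hy hxy => (hJ.mem_or_mem hxy).elim hx hy,
    hJ.top_notMem, fun h => h J.bot_mem,
    fun _ _ h => not_and_or.mp fun hxy => h (J.sup_mem hxy.1 hxy.2)⟩

end Lattice

theorem exists_isPrimeFilter_mem_disjoint_of_notMem {L : Type*} [DistribLattice L]
    [BoundedOrder L] {I : Order.Ideal L} {b : L} (hb : b ∉ I) :
    ∃ q : Set L, IsPrimeFilter q ∧ b ∈ q ∧ Disjoint q I := by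
  have hdisj : Disjoint (Order.PFilter.principal b : Set L) I :=
    Set.disjoint_left.mpr fun _ hbx hx => hb (I.lower hbx hx)
  obtain ⟨J, hJ, hIJ, hbJ⟩ := DistribLattice.prime_ideal_of_disjoint_filter_ideal hdisj
  exact ⟨Jᶜ, hJ.isPrimeFilter_compl, Set.disjoint_left.mp hbJ le_rfl,
    disjoint_compl_left.mono_right hIJ⟩

section CoheytingAlgebra
variable {L : Type*} [CoheytingAlgebra L]

theorem IsPrimeFilter.sdiff_inf_mem {p p' : Set L} (hp : IsPrimeFilter p)
    (hp' : IsPrimeFilter p') (hpp' : p ⊆ p') {a b : L} (hb : b ∈ p) (ha : a ∈ p' \ p) :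
    (b \ a) ⊓ a ∈ p' :=
  have hsdiff : b \ a ∈ p :=
    (hp.mem_or_mem (hp.mem_of_le hb le_sup_sdiff)).resolve_left ha.2
  hp'.inf_mem (hpp' hsdiff) ha.1

theorem IsPrimeFilter.exists_ssubset_of_sdiff_inf_mem {p : Set L} (hp : IsPrimeFilter p)
    {a b : L} (h : (b \ a) ⊓ a ∈ p) : ∃ q : Set L, IsPrimeFilter q ∧ q ⊂ p ∧ b ∈ q := by
  set I := hp.complIdeal ⊔ Order.Ideal.principal a
  have hbI : b ∉ I := by
    rw [Lattice.mem_ideal_sup_principal]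
    rintro ⟨j, hj, hbj⟩
    exact hj (hp.mem_of_le (hp.mem_of_le h inf_le_left) (sdiff_le_iff'.mpr hbj))
  obtain ⟨q, hq, hbq, hqI⟩ := exists_isPrimeFilter_mem_disjoint_of_notMem hbI
  have hqp : q ⊆ p := fun x hx => by
    by_contra hxp
    exact Set.disjoint_left.mp hqI hx (le_sup_left (a := hp.complIdeal) hxp)
  have haq : a ∉ q := fun ha =>
    Set.disjoint_left.mp hqI ha (le_sup_right (b := Order.Ideal.principal a)
      Order.Ideal.mem_principal_self)
  have hap : a ∈ p := hp.mem_of_le h inf_le_right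
  exact ⟨q, hq, hqp.ssubset_of_not_subset fun hpq => haq (hpq hap), hbq⟩

theorem Pterm_mem_last : ∀ {k : ℕ} {q : Fin (k + 1) → Set L} {a : Fin k → L},
    (∀ i, IsPrimeFilter (q i)) → Monotone q → (∀ i, a i ∈ q i.succ \ q i.castSucc) →
    Pterm k a ∈ q (Fin.last k)
  | 0, _, _, hq, _, _ => (hq 0).top_mem
  | k + 1, q, a, hq, hmono, ha => by
    have hinit : Pterm k (fun i => a i.castSucc) ∈ q (Fin.last k).castSucc :=
      Pterm_mem_last (q := fun i => q i.castSucc) (fun _ => hq _)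
        (hmono.comp Fin.strictMono_castSucc.monotone)
        fun i => Fin.succ_castSucc i ▸ ha i.castSucc
    rw [← Fin.succ_last]
    exact (hq _).sdiff_inf_mem (hq _) (hmono (Fin.castSucc_le_succ _)) hinit (ha _)

theorem exists_strictMono_last_eq_of_Pterm_mem : ∀ {k : ℕ} {a : Fin k → L} {p : Set L},
    IsPrimeFilter p → Pterm k a ∈ p →
    ∃ q : Fin (k + 1) → Set L, (∀ i, IsPrimeFilter (q i)) ∧ StrictMono q ∧ q (Fin.last k) = p
  | 0, _, p, hp, _ => ⟨fun _ => p, fun _ => hp, Fin.strictMono_iff_lt_succ.mpr Fin.elim0, rfl⟩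
  | k + 1, a, p, hp, h => by
    obtain ⟨p', hp', hp'p, hp'P⟩ := hp.exists_ssubset_of_sdiff_inf_mem h
    obtain ⟨q, hq, hqmono, hqlast⟩ := exists_strictMono_last_eq_of_Pterm_mem hp' hp'P
    refine ⟨Fin.snoc q p, Fin.lastCases (by simpa using hp) fun i => by simpa using hq i,
      ?_, Fin.snoc_last _ _⟩
    rw [← Fin.insertNth_last', Fin.strictMono_insertNth_iff]
    refine ⟨hqmono, fun i _ => ?_, fun i hi => absurd hi (by simp)⟩
    exact (hqmono.monotone (Fin.le_last i)).trans_lt (hqlast ▸ hp'p)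

end CoheytingAlgebra

theorem stmt10 {L : Type*} [CoheytingAlgebra L] (d : ℕ) :
    (∀ a : Fin (d + 1) → L, Pterm (d + 1) a = ⊥) ↔
      ¬ ∃ q : Fin (d + 2) → Set L,
          (∀ i, IsPrimeFilter (q i)) ∧
          ∀ i j : Fin (d + 2), i < j → q i ⊂ q j := by
  constructor
  · rintro hP ⟨q, hq, hchain⟩
    choose a ha using fun i : Fin (d + 1) =>
      Set.exists_of_ssubset (hchain _ _ (Fin.castSucc_lt_succ (i := i)))
    have hmono : Monotone q := StrictMono.monotone fun _ _ h => hchain _ _ h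
    exact (hq _).bot_notMem (hP a ▸ Pterm_mem_last hq hmono ha)
  · intro hno a
    by_contra hne
    obtain ⟨p, hp, hPp, -⟩ := exists_isPrimeFilter_mem_disjoint_of_notMem
      (I := Order.Ideal.principal ⊥) (b := Pterm (d + 1) a)
      (by rwa [Order.Ideal.mem_principal, le_bot_iff])
    obtain ⟨q, hq, hqmono, -⟩ := exists_strictMono_last_eq_of_Pterm_mem hp hPp
    exact hno ⟨q, hq, fun _ _ h => hqmono h⟩
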